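/- Let a, b be two distinct non-antipodal points on a spherical circle of radius ρ ∈ (0, π/2) on S² with center o, and let t range over the points of one of the two open arcs of the circle determined by a and b. Then the spherical angle ∠atb is maximized when t is equidistant from a and b. -/

import Mathlib

/-!
Take `o` as the pole of an orthonormal frame `e₀ = o, e₁, e₂`, so that the points of the circle
are `cos ρ • o + sin ρ • (cos φ • e₁ + sin φ • e₂)`, and put `a`, `b`, `t` at polar angles
`M + δ`, `M - δ`, `M + θ`. The spherical law of cosines at `t` and a polynomial identity give the
closed form `∠atb = π/2 + arctan (ε (sin² ρ cos θ + (1 + cos² ρ) cos δ) / (2 cos ρ |sin δ|))`,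
where `ε = ±1` is the sign of `cos θ - cos δ`, i.e. it says on which of the two arcs `t` lies.
The angle is therefore increasing in `ε cos θ ≤ 1`, with equality exactly at the midpoint of
the arc, which is the point of the arc equidistant from `a` and `b`.
-/

open scoped RealInnerProductSpace

/-- Spherical distance between unit vectors of `E³`. -/
noncomputable def sdist (p q : EuclideanSpace ℝ (Fin 3)) : ℝ := Real.arccos ⟪p, q⟫

/-- The spherical angle `∠ a t b`: the angle between the tangent directions at `t`
of the great-circle arcs `t a` and `t b`. -/
noncomputable def sAngle (a t b : EuclideanSpace ℝ (Fin 3)) : ℝ :=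
  InnerProductGeometry.angle (a - ⟪a, t⟫ • t) (b - ⟪b, t⟫ • t)

open Real

theorem arccos_neg_div_sqrt_add_sq {g : ℝ} (hg : 0 < g) (x : ℝ) :
    arccos (-(x / √(x ^ 2 + g ^ 2))) = π / 2 + arctan (x / g) := by
  have hsqrt : √(1 + (x / g) ^ 2) = √(x ^ 2 + g ^ 2) / g := by
    rw [show 1 + (x / g) ^ 2 = (x ^ 2 + g ^ 2) / g ^ 2 by field_simp; ring,
      sqrt_div' _ (sq_nonneg g), sqrt_sq hg.le]
  rw [arccos_neg, arccos_eq_pi_div_two_sub_arcsin, arctan_eq_arcsin, hsqrt,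
    div_div_div_cancel_right₀ hg.ne']
  ring

theorem sinusoid_eq_mul_sub_cos {p q r M δ : ℝ} (hδ : sin δ ≠ 0)
    (h₁ : p + q * cos (M + δ) + r * sin (M + δ) = 0)
    (h₂ : p + q * cos (M - δ) + r * sin (M - δ) = 0) (θ : ℝ) :
    p + q * cos (M + θ) + r * sin (M + θ) = (q * cos M + r * sin M) * (cos θ - cos δ) := by
  simp only [cos_add, cos_sub, sin_add, sin_sub] at h₁ h₂ ⊢
  have hrot : r * cos M - q * sin M = 0 :=
    (mul_eq_zero.mp (by linear_combination h₁ - h₂ : 2 * sin δ * (r * cos M - q * sin M) = 0)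
      ).resolve_left (mul_ne_zero two_ne_zero hδ)
  linear_combination (h₁ + h₂) / 2 + sin θ * hrot

/-- The spherical law of cosines: the cosine of the angle at `t` of the spherical triangle
`a t b` with `P = ⟪a, t⟫`, `Q = ⟪b, t⟫`, `R = ⟪a, b⟫`. -/
noncomputable def sphericalCos (P Q R : ℝ) : ℝ :=
  (R - P * Q) / (√(1 - P ^ 2) * √(1 - Q ^ 2))

/-- `c, s` are `cos ρ, sin ρ`; `k, m` and `u, w` are `cos, sin` of `δ` and `θ`, the polar angles
of `a` and `t` measured from the midpoint of the arc (`b` is at `-δ`). -/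
theorem sphericalCos_circle {c s k m u w ε : ℝ} (hcs : c ^ 2 + s ^ 2 = 1)
    (hkm : k ^ 2 + m ^ 2 = 1) (huw : u ^ 2 + w ^ 2 = 1) (hs : s ≠ 0) (hε : ε ^ 2 = 1)
    (hside : 0 < ε * (u - k)) :
    sphericalCos (c ^ 2 + s ^ 2 * (u * k + w * m)) (c ^ 2 + s ^ 2 * (u * k - w * m))
        (c ^ 2 + s ^ 2 * (k ^ 2 - m ^ 2)) =
      -(ε * (s ^ 2 * u + (1 + c ^ 2) * k) /
        √((ε * (s ^ 2 * u + (1 + c ^ 2) * k)) ^ 2 + (2 * c * |m|) ^ 2)) := by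
  set X := s ^ 2 * u + (1 + c ^ 2) * k
  have hnum : c ^ 2 + s ^ 2 * (k ^ 2 - m ^ 2) -
      (c ^ 2 + s ^ 2 * (u * k + w * m)) * (c ^ 2 + s ^ 2 * (u * k - w * m)) =
        -(s ^ 2 * (u - k) * X) := by grind
  have hden : (1 - (c ^ 2 + s ^ 2 * (u * k + w * m)) ^ 2) *
      (1 - (c ^ 2 + s ^ 2 * (u * k - w * m)) ^ 2) =
        (s ^ 2 * (ε * (u - k))) ^ 2 * (X ^ 2 + 4 * c ^ 2 * m ^ 2) := by grind
  have hP : 0 ≤ 1 - (c ^ 2 + s ^ 2 * (u * k + w * m)) ^ 2 := by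
    have hp₁ : u * k + w * m ≤ 1 := by nlinarith [sq_nonneg (u - k), sq_nonneg (w - m)]
    have hp₂ : -1 ≤ u * k + w * m := by nlinarith [sq_nonneg (u + k), sq_nonneg (w + m)]
    have : 1 - (c ^ 2 + s ^ 2 * (u * k + w * m)) ^ 2 =
        s ^ 2 * (1 - (u * k + w * m)) * (2 * c ^ 2 + s ^ 2 * (1 + (u * k + w * m))) := by grind
    rw [this]
    exact mul_nonneg (mul_nonneg (sq_nonneg s) (by linarith))
      (add_nonneg (by positivity) (mul_nonneg (sq_nonneg s) (by linarith)))
  have hG : (ε * X) ^ 2 + (2 * c * |m|) ^ 2 = X ^ 2 + 4 * c ^ 2 * m ^ 2 := by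
    rw [mul_pow, hε, mul_pow, sq_abs]
    ring
  rw [sphericalCos, ← sqrt_mul hP, hden, sqrt_mul (sq_nonneg _), sqrt_sq (by positivity), hnum,
    hG, show s ^ 2 * (u - k) * X = s ^ 2 * (ε * (u - k)) * (ε * X) by
      linear_combination (-(s ^ 2 * (u - k) * X)) * hε,
    neg_div, mul_div_mul_left _ _ (by positivity)]

theorem sAngle_eq_arccos {a t b : EuclideanSpace ℝ (Fin 3)} (ha : ‖a‖ = 1) (hb : ‖b‖ = 1)
    (ht : ‖t‖ = 1) : sAngle a t b = arccos (sphericalCos ⟪a, t⟫ ⟪b, t⟫ ⟪a, b⟫) := by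
  have htt : ⟪t, t⟫ = 1 := by rw [real_inner_self_eq_norm_sq, ht, one_pow]
  have hnorm {v : EuclideanSpace ℝ (Fin 3)} (hv : ‖v‖ = 1) :
      ‖v - ⟪v, t⟫ • t‖ = √(1 - ⟪v, t⟫ ^ 2) := by
    rw [← sqrt_sq (norm_nonneg _), norm_sub_sq_real, real_inner_smul_right, norm_smul, hv, ht,
      norm_eq_abs, mul_one, sq_abs]
    ring_nf
  have hinner :
      ⟪a - ⟪a, t⟫ • t, b - ⟪b, t⟫ • t⟫ = ⟪a, b⟫ - ⟪a, t⟫ * ⟪b, t⟫ := by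
    simp only [inner_sub_left, inner_sub_right, real_inner_smul_left, real_inner_smul_right,
      htt, real_inner_comm t b]
    ring
  rw [sAngle, InnerProductGeometry.angle, hinner, hnorm ha, hnorm hb, sphericalCos]

theorem cos_sdist {p q : EuclideanSpace ℝ (Fin 3)} (hp : ‖p‖ = 1) (hq : ‖q‖ = 1) :
    cos (sdist p q) = ⟪p, q⟫ := by
  have h := abs_real_inner_le_norm p q
  rw [hp, hq, one_mul] at h
  exact cos_arccos (abs_le.mp h).1 (abs_le.mp h).2

theorem exists_orthonormalBasis_zero_eq {E : Type*} [NormedAddCommGroup E]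
    [InnerProductSpace ℝ E] [FiniteDimensional ℝ E] (hE : Module.finrank ℝ E = 3) {o : E}
    (ho : ‖o‖ = 1) : ∃ e : OrthonormalBasis (Fin 3) ℝ E, e 0 = o := by
  obtain ⟨e, he⟩ := Orthonormal.exists_orthonormalBasis_extension_of_card_eq (𝕜 := ℝ)
    (v := fun _ : Fin 3 => o) (s := {0}) (by simpa using hE)
    (orthonormal_subsingleton_iff.mpr fun _ => ho)
  exact ⟨e, he 0 rfl⟩

noncomputable def circlePoint {E : Type*} [NormedAddCommGroup E] [InnerProductSpace ℝ E]
    (e : OrthonormalBasis (Fin 3) ℝ E) (ρ φ : ℝ) : E :=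
  cos ρ • e 0 + sin ρ • (cos φ • e 1 + sin φ • e 2)

section
variable {E : Type*} [NormedAddCommGroup E] [InnerProductSpace ℝ E]
  (e : OrthonormalBasis (Fin 3) ℝ E)

theorem inner_circlePoint_right (n : E) (ρ φ : ℝ) :
    ⟪n, circlePoint e ρ φ⟫ =
      cos ρ * ⟪n, e 0⟫ + sin ρ * ⟪n, e 1⟫ * cos φ + sin ρ * ⟪n, e 2⟫ * sin φ := by
  simp only [circlePoint, inner_add_right, real_inner_smul_right]
  ring

theorem inner_circlePoint_circlePoint (ρ φ ψ : ℝ) :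
    ⟪circlePoint e ρ φ, circlePoint e ρ ψ⟫ = cos ρ ^ 2 + sin ρ ^ 2 * cos (φ - ψ) := by
  have h := orthonormal_iff_ite.mp e.orthonormal
  rw [inner_circlePoint_right, real_inner_comm (e 0), real_inner_comm (e 1),
    real_inner_comm (e 2)]
  simp only [inner_circlePoint_right, h]
  simp only [Fin.isValue, Fin.reduceEq, if_true, if_false, cos_sub]
  ring

theorem norm_circlePoint (ρ φ : ℝ) : ‖circlePoint e ρ φ‖ = 1 := by
  have h := inner_circlePoint_circlePoint e ρ φ φ
  rw [sub_self, cos_zero, mul_one, cos_sq_add_sin_sq, real_inner_self_eq_norm_sq] at h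
  exact (pow_eq_one_iff_of_nonneg (norm_nonneg _) two_ne_zero).mp h

theorem exists_eq_circlePoint {ρ : ℝ} (hρ : 0 < sin ρ) {v : E} (hv : ‖v‖ = 1)
    (hov : ⟪e 0, v⟫ = cos ρ) : ∃ φ, v = circlePoint e ρ φ := by
  set z : ℂ := ⟪e 1, v⟫ + ⟪e 2, v⟫ * Complex.I
  have hz : ‖z‖ = sin ρ := by
    have h := e.sum_sq_inner_right v
    rw [Fin.sum_univ_three, hov, hv] at h
    rw [Complex.norm_add_mul_I, ← sqrt_sq hρ.le]
    congr 1
    nlinarith [sin_sq_add_cos_sq ρ]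
  refine ⟨Complex.arg z, ?_⟩
  have hre := Complex.norm_mul_cos_arg z
  have him := Complex.norm_mul_sin_arg z
  rw [hz] at hre him
  conv_lhs => rw [← e.sum_repr' v]
  simp only [Fin.sum_univ_three, circlePoint, smul_add, smul_smul, hov, hre, him, z]
  simp [add_assoc]

theorem circlePoint_add_eq_sub {ρ M δ : ℝ} (hδ : sin δ = 0) :
    circlePoint e ρ (M + δ) = circlePoint e ρ (M - δ) := by
  simp only [circlePoint, cos_add, cos_sub, sin_add, sin_sub, hδ, mul_zero, sub_zero, add_zero]

theorem exists_inner_circlePoint_eq_mul_sub_cos {n : E} {ρ M δ : ℝ} (hδ : sin δ ≠ 0)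
    (ha : ⟪n, circlePoint e ρ (M + δ)⟫ = 0) (hb : ⟪n, circlePoint e ρ (M - δ)⟫ = 0) :
    ∃ l : ℝ, ∀ θ, ⟪n, circlePoint e ρ (M + θ)⟫ = l * (cos θ - cos δ) := by
  rw [inner_circlePoint_right] at ha hb
  exact ⟨_, fun θ => by rw [inner_circlePoint_right]; exact sinusoid_eq_mul_sub_cos hδ ha hb θ⟩

end

section
variable (e : OrthonormalBasis (Fin 3) ℝ (EuclideanSpace ℝ (Fin 3)))

theorem exists_eq_circlePoint_of_sdist {ρ : ℝ} (hρ : 0 < sin ρ) {v : EuclideanSpace ℝ (Fin 3)}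
    (hv : ‖v‖ = 1) (h : sdist (e 0) v = ρ) : ∃ φ, v = circlePoint e ρ φ :=
  exists_eq_circlePoint e hρ hv (h ▸ cos_sdist (e.orthonormal.1 0) hv).symm

theorem sin_eq_zero_of_sdist_eq {ρ M δ θ : ℝ} (hs : sin ρ ≠ 0) (hδ : sin δ ≠ 0)
    (h : sdist (circlePoint e ρ (M + θ)) (circlePoint e ρ (M + δ)) =
      sdist (circlePoint e ρ (M + θ)) (circlePoint e ρ (M - δ))) :
    sin θ = 0 := by
  replace h := congrArg cos h
  rw [cos_sdist (norm_circlePoint e ρ _) (norm_circlePoint e ρ _),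
    cos_sdist (norm_circlePoint e ρ _) (norm_circlePoint e ρ _),
    inner_circlePoint_circlePoint, inner_circlePoint_circlePoint,
    show M + θ - (M + δ) = θ - δ by ring, show M + θ - (M - δ) = θ + δ by ring,
    cos_sub, cos_add] at h
  have h' : sin ρ ^ 2 * sin δ * sin θ = 0 := by linear_combination h / 2
  exact (mul_eq_zero.mp h').resolve_left (mul_ne_zero (pow_ne_zero 2 hs) hδ)

theorem sAngle_circlePoint {ρ M δ θ ε : ℝ} (hc : 0 < cos ρ) (hs : sin ρ ≠ 0) (hδ : sin δ ≠ 0)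
    (hε : ε ^ 2 = 1) (hside : 0 < ε * (cos θ - cos δ)) :
    sAngle (circlePoint e ρ (M + δ)) (circlePoint e ρ (M + θ)) (circlePoint e ρ (M - δ)) =
      π / 2 + arctan (ε * (sin ρ ^ 2 * cos θ + (1 + cos ρ ^ 2) * cos δ) /
        (2 * cos ρ * |sin δ|)) := by
  have hat : cos (M + δ - (M + θ)) = cos θ * cos δ + sin θ * sin δ := by
    rw [← cos_sub, ← cos_neg]; congr 1; ring
  have hbt : cos (M - δ - (M + θ)) = cos θ * cos δ - sin θ * sin δ := by
    rw [← cos_add, ← cos_neg]; congr 1; ring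
  have hab : cos (M + δ - (M - δ)) = cos δ ^ 2 - sin δ ^ 2 := by
    rw [← cos_two_mul']; congr 1; ring
  rw [sAngle_eq_arccos (norm_circlePoint e ρ _) (norm_circlePoint e ρ _)
      (norm_circlePoint e ρ _), inner_circlePoint_circlePoint, inner_circlePoint_circlePoint,
    inner_circlePoint_circlePoint,
    hat, hbt, hab, sphericalCos_circle (cos_sq_add_sin_sq ρ) (cos_sq_add_sin_sq δ)
      (cos_sq_add_sin_sq θ) hs hε hside, arccos_neg_div_sqrt_add_sq (by positivity)]

end

theorem stmt15_general (ρ : ℝ) (hρ : ρ ∈ Set.Ioo 0 (Real.pi / 2))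
    (o a b t t' : EuclideanSpace ℝ (Fin 3))
    (ho : ‖o‖ = 1) (ha : ‖a‖ = 1) (hb : ‖b‖ = 1) (ht : ‖t‖ = 1) (ht' : ‖t'‖ = 1)
    (haC : sdist o a = ρ) (hbC : sdist o b = ρ) (htC : sdist o t = ρ) (ht'C : sdist o t' = ρ)
    (hab : a ≠ b)
    -- `t` and `t'` lie strictly on the same side of the great circle through `a` and `b`:
    (n : EuclideanSpace ℝ (Fin 3)) (hna : ⟪n, a⟫ = 0) (hnb : ⟪n, b⟫ = 0)
    (hnt : 0 < ⟪n, t⟫) (hnt' : 0 < ⟪n, t'⟫)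
    -- `t'` is equidistant from `a` and `b`:
    (heq : sdist t' a = sdist t' b) :
    sAngle a t b ≤ sAngle a t' b := by
  obtain ⟨hρ₀, hρ₁⟩ := hρ
  have hc : 0 < cos ρ := cos_pos_of_mem_Ioo ⟨by linarith [pi_pos], hρ₁⟩
  have hs : 0 < sin ρ := sin_pos_of_pos_of_lt_pi hρ₀ (by linarith [pi_pos])
  obtain ⟨e, rfl⟩ := exists_orthonormalBasis_zero_eq finrank_euclideanSpace_fin ho
  obtain ⟨α, rfl⟩ := exists_eq_circlePoint_of_sdist e hs ha haC
  obtain ⟨β, rfl⟩ := exists_eq_circlePoint_of_sdist e hs hb hbC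
  obtain ⟨τ, rfl⟩ := exists_eq_circlePoint_of_sdist e hs ht htC
  obtain ⟨τ', rfl⟩ := exists_eq_circlePoint_of_sdist e hs ht' ht'C
  obtain ⟨M, δ, rfl, rfl⟩ : ∃ M δ, α = M + δ ∧ β = M - δ :=
    ⟨(α + β) / 2, (α - β) / 2, by ring, by ring⟩
  obtain ⟨θ, rfl⟩ : ∃ θ, τ = M + θ := ⟨τ - M, by ring⟩
  obtain ⟨θ', rfl⟩ : ∃ θ', τ' = M + θ' := ⟨τ' - M, by ring⟩
  have hδ : sin δ ≠ 0 := fun h => hab (circlePoint_add_eq_sub e h)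
  have hθ' : sin θ' = 0 := sin_eq_zero_of_sdist_eq e hs.ne' hδ heq
  have hε : cos θ' ^ 2 = 1 := by linear_combination cos_sq_add_sin_sq θ' - sin θ' * hθ'
  obtain ⟨l, hn⟩ := exists_inner_circlePoint_eq_mul_sub_cos e hδ hna hnb
  rw [hn] at hnt hnt'
  -- `t'` is the midpoint of its arc, and `ε := cos θ' = ±1` is the sign that arc gives to
  -- `cos θ - cos δ`
  have hside' : 0 < cos θ' * (cos θ' - cos δ) := by
    nlinarith [sq_nonneg (cos θ' - cos δ), sin_sq_add_cos_sq δ, sq_pos_of_ne_zero hδ]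
  have hside : 0 < cos θ' * (cos θ - cos δ) := by
    nlinarith [mul_pos (mul_pos hnt hnt') hside']
  rw [sAngle_circlePoint e hc hs.ne' hδ hε hside, sAngle_circlePoint e hc hs.ne' hδ hε hside',
    add_le_add_iff_left, arctan_le_arctan_iff]
  refine div_le_div_of_nonneg_right ?_ (by positivity)
  nlinarith [sq_nonneg (cos θ' - cos θ), sin_sq_add_cos_sq θ, sq_nonneg (sin ρ)]

theorem stmt15 (ρ : ℝ) (hρ : ρ ∈ Set.Ioo 0 (Real.pi / 2))
    (o a b t t' : EuclideanSpace ℝ (Fin 3))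
    (ho : ‖o‖ = 1) (ha : ‖a‖ = 1) (hb : ‖b‖ = 1) (ht : ‖t‖ = 1) (ht' : ‖t'‖ = 1)
    (haC : sdist o a = ρ) (hbC : sdist o b = ρ) (htC : sdist o t = ρ) (ht'C : sdist o t' = ρ)
    (hab : a ≠ b) (hab' : a ≠ -b)
    -- `t` and `t'` lie strictly on the same side of the great circle through `a` and `b`:
    (n : EuclideanSpace ℝ (Fin 3)) (hn : n ≠ 0) (hna : ⟪n, a⟫ = 0) (hnb : ⟪n, b⟫ = 0)
    (hnt : 0 < ⟪n, t⟫) (hnt' : 0 < ⟪n, t'⟫)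
    -- `t'` is equidistant from `a` and `b`:
    (heq : sdist t' a = sdist t' b) :
    sAngle a t b ≤ sAngle a t' b :=
  stmt15_general ρ hρ o a b t t' ho ha hb ht ht' haC hbC htC ht'C hab n hna hnb hnt hnt' heq
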